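/- arXiv:1505.07493 — 7 statements merged into one kernel-verified Lean document; each statement's English description precedes it below -/
import Mathlib

section
/- Let H be a finite subgroup of the ring automorphism group of A such that R ⊆ A^H, and assume 𝓑 is σ-trace orthogonal with respect to H. Then for all x = (x_1, …, x_n), y = (y_1, …, y_n) ∈ A^n, writing x_i = ∑_{j=1}^r α_{ij} v_j and y_i = ∑_{k=1}^r β_{ik} v_k with α_{ij}, β_{ik} ∈ R, one has Tr_H(⟨x,y⟩_{A^n}) = ∑_{i=1}^n ∑_{j=1}^r α_{ij} · Tr_H(v_j σ(v_j)) · σ(β_{ij}). -/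
/-!
Expanding both arguments in the basis, `Tr_H (x_i σ(y_i))` becomes a double sum of terms
`α_{ij} Tr_H (v_j σ(v_k)) σ(β_{ik})`: the coefficients can be pulled out of the trace because
`R` (and hence `σ(R) = R`) is fixed by `H`. Trace orthogonality kills every term with `j ≠ k`.
-/

open Finset

section AntiMultiplicative

variable {A : Type*} [Ring A] {σ : A → A}

theorem map_sum_of_map_add (hadd : ∀ a b : A, σ (a + b) = σ a + σ b)
    {ι : Type*} (s : Finset ι) (f : ι → A) : σ (∑ i ∈ s, f i) = ∑ i ∈ s, σ (f i) :=
  map_sum (AddMonoidHom.mk' σ hadd) f s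

theorem sum_mul_map_sum_of_antimul (hadd : ∀ a b : A, σ (a + b) = σ a + σ b)
    (hmul : ∀ a b : A, σ (a * b) = σ b * σ a) {ι : Type*} [Fintype ι] (v a b : ι → A) :
    (∑ j, a j * v j) * σ (∑ k, b k * v k) = ∑ j, ∑ k, a j * (v j * σ (v k)) * σ (b k) := by
  rw [map_sum_of_map_add hadd, sum_mul_sum]
  refine sum_congr rfl fun j _ => sum_congr rfl fun k _ => ?_
  rw [hmul]
  noncomm_ring

end AntiMultiplicative

section HTrace

variable {A : Type*} [Ring A] (H : Subgroup (A ≃+* A)) [Fintype H]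

theorem Subgroup.sum_apply_mul_mul_of_forall_fixed {a c : A}
    (ha : ∀ h ∈ H, h a = a) (hc : ∀ h ∈ H, h c = c) (b : A) :
    ∑ h : H, (h : A ≃+* A) (a * b * c) = a * (∑ h : H, (h : A ≃+* A) b) * c := by
  rw [mul_sum, sum_mul]
  refine sum_congr rfl fun h _ => ?_
  rw [map_mul, map_mul, ha h h.2, hc h h.2]

theorem Subgroup.sum_apply_sum_mul_map_sum {σ : A → A}
    (hadd : ∀ a b : A, σ (a + b) = σ a + σ b)
    (hmul : ∀ a b : A, σ (a * b) = σ b * σ a) {ι : Type*} [Fintype ι] (v a b : ι → A)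
    (ha : ∀ j, ∀ h ∈ H, h (a j) = a j) (hb : ∀ k, ∀ h ∈ H, h (σ (b k)) = σ (b k)) :
    ∑ h : H, (h : A ≃+* A) ((∑ j, a j * v j) * σ (∑ k, b k * v k))
      = ∑ j, ∑ k, a j * (∑ h : H, (h : A ≃+* A) (v j * σ (v k))) * σ (b k) := by
  simp only [sum_mul_map_sum_of_antimul hadd hmul, map_sum]
  rw [sum_comm]
  refine sum_congr rfl fun j _ => ?_
  rw [sum_comm]
  exact sum_congr rfl fun k _ => H.sum_apply_mul_mul_of_forall_fixed (ha j) (hb k) _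

end HTrace

theorem Finset.sum_sum_mul_mul_eq_sum_diag {A ι : Type*} [NonUnitalNonAssocSemiring A]
    [Fintype ι] [DecidableEq ι] (a b : ι → A) (G : ι → ι → A)
    (hG : ∀ j k, j ≠ k → G j k = 0) :
    ∑ j, ∑ k, a j * G j k * b k = ∑ j, a j * G j j * b j :=
  sum_congr rfl fun j _ =>
    sum_eq_single j (fun k _ hk => by rw [hG j k (Ne.symm hk), mul_zero, zero_mul])
      (by simp)

theorem stmt_4_general {A : Type*} [Ring A] (R : Subring A)
    (r : ℕ) (v : Fin r → A)
    (σ : A → A)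
    (hadd : ∀ a b : A, σ (a + b) = σ a + σ b)
    (hmul : ∀ a b : A, σ (a * b) = σ b * σ a)
    (hσR : σ '' (R : Set A) = (R : Set A))
    (H : Subgroup (A ≃+* A)) [Fintype H]
    (hRfix : ∀ x ∈ R, ∀ h ∈ H, h x = x)
    (htro : ∀ i j : Fin r, (∑ h : H, (h : A ≃+* A) (v i * σ (v j))) = 0 ↔ i ≠ j)
    (n : ℕ) (x y : Fin n → A) (α β : Fin n → Fin r → R)
    (hx : ∀ i, x i = ∑ j, (α i j : A) * v j)
    (hy : ∀ i, y i = ∑ k, (β i k : A) * v k) :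
    (∑ h : H, (h : A ≃+* A) (∑ i, x i * σ (y i)))
      = ∑ i, ∑ j, (α i j : A) * (∑ h : H, (h : A ≃+* A) (v j * σ (v j))) *
          σ ((β i j : A)) := by
  have hσfix : ∀ b ∈ R, ∀ h ∈ H, h (σ b) = σ b := fun b hb =>
    hRfix _ (hσR.subset ⟨b, hb, rfl⟩)
  rw [sum_congr rfl fun (h : H) _ => map_sum (h : A ≃+* A) (fun i => x i * σ (y i)) univ,
    sum_comm]
  refine sum_congr rfl fun i _ => ?_
  rw [hx, hy, H.sum_apply_sum_mul_map_sum hadd hmul _ _ _ (fun j => hRfix _ (α i j).2)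
    (fun k => hσfix _ (β i k).2)]
  exact sum_sum_mul_mul_eq_sum_diag _ _ _ fun j k hjk => (htro j k).mpr hjk

/-- Lemma: if `𝓑 = (v_1, …, v_r)` is a σ-trace-orthogonal `R`-basis of `A`
with respect to a finite subgroup `H` of `Aut(A)` whose fixed ring contains
`R`, then the trace of the standard σ-hermitian form collapses to the
diagonal terms:
`Tr_H ⟨x,y⟩ = ∑ i ∑ j, α i j * Tr_H (v j * σ (v j)) * σ (β i j)`. -/
theorem stmt_4 {A : Type*} [Ring A] [Fintype A] (R : Subring A)
    (r : ℕ) (v : Fin r → A)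
    (hbasis : ∀ a : A, ∃! c : Fin r → R, a = ∑ i, (c i : A) * v i)
    (σ : A → A)
    (hbij : Function.Bijective σ)
    (hadd : ∀ a b : A, σ (a + b) = σ a + σ b)
    (hmul : ∀ a b : A, σ (a * b) = σ b * σ a)
    (hone : σ 1 = 1)
    (hinv : ∀ a : A, σ (σ a) = a)
    (hσR : σ '' (R : Set A) = (R : Set A))
    (H : Subgroup (A ≃+* A)) [Fintype H]
    (hRfix : ∀ x ∈ R, ∀ h ∈ H, h x = x)
    (htro : ∀ i j : Fin r, (∑ h : H, (h : A ≃+* A) (v i * σ (v j))) = 0 ↔ i ≠ j)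
    (n : ℕ) (x y : Fin n → A) (α β : Fin n → Fin r → R)
    (hx : ∀ i, x i = ∑ j, (α i j : A) * v j)
    (hy : ∀ i, y i = ∑ k, (β i k : A) * v k) :
    (∑ h : H, (h : A ≃+* A) (∑ i, x i * σ (y i)))
      = ∑ i, ∑ j, (α i j : A) * (∑ h : H, (h : A ≃+* A) (v j * σ (v j))) *
          σ ((β i j : A)) :=
  stmt_4_general R r v σ hadd hmul hσR H hRfix htro n x y α β hx hy
end

section
/- Let H be a finite subgroup of the ring automorphism group of A such that R ⊆ A^H, and assume 𝓑 is σ-pseudo-self-dual with respect to H. Then for all x, y ∈ A^n, if ⟨x,y⟩_{A^n} = 0 then ⟨Φ(x),Φ(y)⟩_{R^{nr}} = 0. -/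
/-!
Apply the trace `Tr_H = ∑_{h ∈ H} h` to `⟨x, y⟩ = ∑ᵢ xᵢ σ(yᵢ) = 0`. Expanding each `xᵢ` and `yᵢ` in
the basis, the coordinates lie in `R ⊆ A^H` and so pull out of the trace; trace orthogonality kills
the cross terms and each diagonal term contributes `γ`. Since `γ` commutes with `R`, this gives
`0 = γ · ⟨Φ(x), Φ(y)⟩`, and `γ` is not a zero divisor.
-/

open Finset

section

variable {A : Type*} [Ring A]

def autTrace (H : Subgroup (A ≃+* A)) [Fintype H] : A →+ A :=
  ∑ h : H, ((h : A ≃+* A) : A →+ A)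

theorem autTrace_apply (H : Subgroup (A ≃+* A)) [Fintype H] (a : A) :
    autTrace H a = ∑ h : H, (h : A ≃+* A) a := by
  simp [autTrace]

theorem autTrace_mul_mul_of_fixed {H : Subgroup (A ≃+* A)} [Fintype H] {c d : A}
    (hc : ∀ h ∈ H, h c = c) (hd : ∀ h ∈ H, h d = d) (a : A) :
    autTrace H (c * a * d) = c * autTrace H a * d := by
  simp only [autTrace_apply, map_mul, mul_sum, sum_mul]
  exact sum_congr rfl fun h _ => by rw [hc _ h.2, hd _ h.2]

theorem sum_mul_map_sum {ι : Type*} [Fintype ι] (σ : A →+ A)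
    (hmul : ∀ a b : A, σ (a * b) = σ b * σ a) (c d v : ι → A) :
    (∑ j, c j * v j) * σ (∑ k, d k * v k) = ∑ j, ∑ k, c j * (v j * σ (v k)) * σ (d k) := by
  simp only [map_sum, hmul, sum_mul_sum, mul_assoc]

theorem autTrace_sum_mul_map_sum {ι : Type*} [Fintype ι] [DecidableEq ι] (v : ι → A)
    (σ : A →+ A) (hmul : ∀ a b : A, σ (a * b) = σ b * σ a)
    (H : Subgroup (A ≃+* A)) [Fintype H] (γ : A)
    (horth : ∀ i j, i ≠ j → autTrace H (v i * σ (v j)) = 0)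
    (hdiag : ∀ i, autTrace H (v i * σ (v i)) = γ)
    (c d : ι → A) (hc : ∀ j, ∀ h ∈ H, h (c j) = c j)
    (hd : ∀ k, ∀ h ∈ H, h (σ (d k)) = σ (d k)) (hγ : ∀ j, γ * c j = c j * γ) :
    autTrace H ((∑ j, c j * v j) * σ (∑ k, d k * v k)) = γ * ∑ j, c j * σ (d j) := by
  rw [sum_mul_map_sum σ hmul, mul_sum]
  simp only [map_sum, autTrace_mul_mul_of_fixed (hc _) (hd _)]
  refine sum_congr rfl fun j _ => ?_
  rw [sum_eq_single_of_mem j (mem_univ j) fun k _ hkj => by rw [horth j k hkj.symm]; simp,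
    hdiag, ← hγ, mul_assoc]

end

theorem stmt_5_general {A : Type*} [Ring A] (R : Subring A)
    (r : ℕ) (v : Fin r → A) (ρ : A → Fin r → R)
    (hρ : ∀ a : A, a = ∑ i, (ρ a i : A) * v i)
    (σ : A → A)
    (hadd : ∀ a b : A, σ (a + b) = σ a + σ b)
    (hmul : ∀ a b : A, σ (a * b) = σ b * σ a)
    (hσR : σ '' (R : Set A) = (R : Set A))
    (H : Subgroup (A ≃+* A)) [Fintype H]
    (hRfix : ∀ x ∈ R, ∀ h ∈ H, h x = x)
    (htro : ∀ i j : Fin r, (∑ h : H, (h : A ≃+* A) (v i * σ (v j))) = 0 ↔ i ≠ j)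
    (γ : A)
    (hγl : ∀ a : A, γ * a = 0 → a = 0)
    (hγR : ∀ x ∈ R, γ * x = x * γ)
    (hγtr : ∀ i : Fin r, (∑ h : H, (h : A ≃+* A) (v i * σ (v i))) = γ)
    (n : ℕ) (x y : Fin n → A)
    (hxy : ∑ i, x i * σ (y i) = 0) :
    ∑ i, ∑ j, (ρ (x i) j : A) * σ ((ρ (y i) j : A)) = 0 := by
  have hσmem : ∀ b ∈ R, σ b ∈ R := fun b hb => by
    rw [← SetLike.mem_coe, ← hσR]; exact Set.mem_image_of_mem σ hb
  have htrace : ∀ a b : A,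
      autTrace H (a * σ b) = γ * ∑ j, (ρ a j : A) * σ (ρ b j) := fun a b => by
    conv_lhs => rw [hρ a, hρ b]
    exact autTrace_sum_mul_map_sum v (AddMonoidHom.mk' σ hadd) hmul H γ
      (fun i j hij => by rw [autTrace_apply]; exact (htro i j).mpr hij)
      (fun i => by rw [autTrace_apply]; exact hγtr i) _ _
      (fun j => hRfix _ (ρ a j).2) (fun k => hRfix _ (hσmem _ (ρ b k).2))
      (fun j => hγR _ (ρ a j).2)
  apply hγl
  rw [mul_sum, ← sum_congr rfl fun i _ => htrace (x i) (y i), ← map_sum, hxy, map_zero]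

/-- Lemma: if `𝓑 = (v_1, …, v_r)` is a σ-pseudo-self-dual `R`-basis of `A`
with respect to a finite subgroup `H` of `Aut(A)` whose fixed ring contains
`R`, then the coordinate map `Φ` preserves orthogonality:
`⟨x,y⟩_{A^n} = 0` implies `⟨Φ(x),Φ(y)⟩_{R^{nr}} = 0`. -/
theorem stmt_5 {A : Type*} [Ring A] [Fintype A] (R : Subring A)
    (r : ℕ) (v : Fin r → A) (ρ : A → Fin r → R)
    (hρ : ∀ a : A, a = ∑ i, (ρ a i : A) * v i)
    (huniq : ∀ c : Fin r → R, ∑ i, (c i : A) * v i = 0 → ∀ i, c i = 0)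
    (σ : A → A)
    (hbij : Function.Bijective σ)
    (hadd : ∀ a b : A, σ (a + b) = σ a + σ b)
    (hmul : ∀ a b : A, σ (a * b) = σ b * σ a)
    (hone : σ 1 = 1)
    (hinv : ∀ a : A, σ (σ a) = a)
    (hσR : σ '' (R : Set A) = (R : Set A))
    (H : Subgroup (A ≃+* A)) [Fintype H]
    (hRfix : ∀ x ∈ R, ∀ h ∈ H, h x = x)
    (htro : ∀ i j : Fin r, (∑ h : H, (h : A ≃+* A) (v i * σ (v j))) = 0 ↔ i ≠ j)
    (γ : A)
    (hγl : ∀ a : A, γ * a = 0 → a = 0)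
    (hγr : ∀ a : A, a * γ = 0 → a = 0)
    (hγR : ∀ x ∈ R, γ * x = x * γ)
    (hγtr : ∀ i : Fin r, (∑ h : H, (h : A ≃+* A) (v i * σ (v i))) = γ)
    (n : ℕ) (x y : Fin n → A)
    (hxy : ∑ i, x i * σ (y i) = 0) :
    ∑ i, ∑ j, (ρ (x i) j : A) * σ ((ρ (y i) j : A)) = 0 :=
  stmt_5_general R r v ρ hρ σ hadd hmul hσR H hRfix htro γ hγl hγR hγtr n x y hxy
end

section
/- Let H be a finite subgroup of the ring automorphism group of A with R ⊆ A^H, assume 𝓑 is σ-pseudo-self-dual with respect to H, and let C ⊆ A^n be a left A-submodule (a linear code of length n over A). Assume furthermore the cardinality identities |C| · |C^⊥| = |A|^n and |Φ(C)| · |Φ(C)^⊥| = |R|^{rn} (these hold whenever A and R are finite Frobenius rings, by Wood's theorem). Then Φ(C^⊥) = Φ(C)^⊥. -/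
/-!
Write `Tr_H` for `∑ h ∈ H, h`. Since the coordinates of `a` and `b` lie in `R ⊆ A^H` and `σ(R) = R`,
`Tr_H(a σ(b)) = ∑ j k, a_j Tr_H(v_j σ(v_k)) σ(b_k)`, and pseudo-self-duality collapses this to
`γ ⟨ρ a, ρ b⟩`. Hence `⟨x, y⟩_{A^n} = 0` forces `γ ⟨Φ x, Φ y⟩_{R^{rn}} = 0`, and `γ` is not a zero
divisor, so `Φ(C^⊥) ⊆ Φ(C)^⊥`. Both sides have `|R|^{rn} / |C|` elements, because `Φ` is injective
and `|A| = |R|^r`.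
-/

open Finset

section Coordinates

variable {A : Type*} [Ring A] {R : Subring A} {r : ℕ} {v : Fin r → A} {ρ : A → Fin r → R}

theorem coords_bijective (hρ : ∀ a : A, a = ∑ i, (ρ a i : A) * v i)
    (huniq : ∀ c : Fin r → R, ∑ i, (c i : A) * v i = 0 → ∀ i, c i = 0) :
    Function.Bijective ρ := by
  have hleft : Function.LeftInverse (fun c : Fin r → R => ∑ i, (c i : A) * v i) ρ :=
    fun a => (hρ a).symm
  have hcombo_inj : Function.Injective fun c : Fin r → R => ∑ i, (c i : A) * v i := by
    intro c d hcd
    have hzero := huniq (c - d) (by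
      simpa only [Pi.sub_apply, AddSubgroupClass.coe_sub, sub_mul, sum_sub_distrib, sub_eq_zero]
        using hcd)
    exact funext fun i => sub_eq_zero.mp (hzero i)
  exact ⟨hleft.injective, (hleft.rightInverse_of_injective hcombo_inj).surjective⟩

theorem card_eq_card_pow_of_coords (hρ : ∀ a : A, a = ∑ i, (ρ a i : A) * v i)
    (huniq : ∀ c : Fin r → R, ∑ i, (c i : A) * v i = 0 → ∀ i, c i = 0) :
    Nat.card A = Nat.card R ^ r := by
  rw [Nat.card_eq_of_bijective ρ (coords_bijective hρ huniq), Nat.card_fun, Nat.card_fin]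

theorem injective_pi_coords (hρ : ∀ a : A, a = ∑ i, (ρ a i : A) * v i) (n : ℕ) :
    Function.Injective fun (x : Fin n → A) (i : Fin n) (j : Fin r) => ρ (x i) j :=
  Function.Injective.piMap (f := fun _ => ρ) fun _ =>
    Function.LeftInverse.injective (g := fun c : Fin r → R => ∑ i, (c i : A) * v i)
      fun a => (hρ a).symm

end Coordinates

theorem sum_map_mul_mul_of_fixed {A : Type*} [Ring A] (H : Subgroup (A ≃+* A)) [Fintype H]
    {x y : A} (hx : ∀ h ∈ H, h x = x) (hy : ∀ h ∈ H, h y = y) (a : A) :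
    ∑ h : H, (h : A ≃+* A) (x * a * y) = x * (∑ h : H, (h : A ≃+* A) a) * y := by
  simp only [map_mul, hx _ (Subtype.prop _), hy _ (Subtype.prop _), mul_sum, sum_mul]

theorem sum_sum_mul_mul_of_diagonal {A ι : Type*} [Ring A] [Fintype ι] {γ : A}
    (c d : ι → A) (G : ι → ι → A) (hoff : ∀ i j, i ≠ j → G i j = 0) (hdiag : ∀ i, G i i = γ)
    (hcomm : ∀ i, γ * c i = c i * γ) :
    ∑ i, ∑ j, c i * G i j * d j = γ * ∑ i, c i * d i := by
  rw [mul_sum]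
  refine sum_congr rfl fun i _ => ?_
  rw [Fintype.sum_eq_single i fun j hj => by rw [hoff i j hj.symm, mul_zero, zero_mul],
    hdiag, ← hcomm, mul_assoc]

section PseudoSelfDual

variable {A : Type*} [Ring A] {R : Subring A} {r : ℕ} {v : Fin r → A} {ρ : A → Fin r → R}
  {σ : A → A} {H : Subgroup (A ≃+* A)} [Fintype H] {γ : A}

theorem mul_sigma_eq_sum_sum (hρ : ∀ a : A, a = ∑ i, (ρ a i : A) * v i)
    (hadd : ∀ a b : A, σ (a + b) = σ a + σ b) (hmul : ∀ a b : A, σ (a * b) = σ b * σ a)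
    (a b : A) :
    a * σ b = ∑ j, ∑ k, (ρ a j : A) * (v j * σ (v k)) * σ (ρ b k) := by
  have hσsum (f : Fin r → A) : σ (∑ k, f k) = ∑ k, σ (f k) :=
    map_sum (AddMonoidHom.mk' σ hadd) f _
  conv_lhs => rw [hρ a, hρ b]
  rw [hσsum, sum_mul_sum]
  simp only [hmul, mul_assoc]

theorem trace_mul_sigma_eq_sum_sum (hρ : ∀ a : A, a = ∑ i, (ρ a i : A) * v i)
    (hadd : ∀ a b : A, σ (a + b) = σ a + σ b) (hmul : ∀ a b : A, σ (a * b) = σ b * σ a)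
    (hσR : ∀ x ∈ R, σ x ∈ R) (hRfix : ∀ x ∈ R, ∀ h ∈ H, h x = x) (a b : A) :
    ∑ h : H, (h : A ≃+* A) (a * σ b) =
      ∑ j, ∑ k, (ρ a j : A) * (∑ h : H, (h : A ≃+* A) (v j * σ (v k))) * σ (ρ b k) := by
  simp only [mul_sigma_eq_sum_sum hρ hadd hmul a b, map_sum]
  rw [sum_comm]
  refine sum_congr rfl fun j _ => ?_
  rw [sum_comm]
  exact sum_congr rfl fun k _ => sum_map_mul_mul_of_fixed H
    (hRfix _ (ρ a j).2) (hRfix _ (hσR _ (ρ b k).2)) _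

theorem trace_mul_sigma_eq_gamma_mul (hρ : ∀ a : A, a = ∑ i, (ρ a i : A) * v i)
    (hadd : ∀ a b : A, σ (a + b) = σ a + σ b) (hmul : ∀ a b : A, σ (a * b) = σ b * σ a)
    (hσR : ∀ x ∈ R, σ x ∈ R) (hRfix : ∀ x ∈ R, ∀ h ∈ H, h x = x)
    (hoff : ∀ i j : Fin r, i ≠ j → ∑ h : H, (h : A ≃+* A) (v i * σ (v j)) = 0)
    (hγR : ∀ x ∈ R, γ * x = x * γ)
    (hγtr : ∀ i : Fin r, (∑ h : H, (h : A ≃+* A) (v i * σ (v i))) = γ) (a b : A) :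
    ∑ h : H, (h : A ≃+* A) (a * σ b) = γ * ∑ j, (ρ a j : A) * σ (ρ b j) := by
  rw [trace_mul_sigma_eq_sum_sum hρ hadd hmul hσR hRfix]
  exact sum_sum_mul_mul_of_diagonal _ _ _ hoff hγtr fun j => hγR _ (ρ a j).2

theorem trace_form_eq_gamma_mul (hρ : ∀ a : A, a = ∑ i, (ρ a i : A) * v i)
    (hadd : ∀ a b : A, σ (a + b) = σ a + σ b) (hmul : ∀ a b : A, σ (a * b) = σ b * σ a)
    (hσR : ∀ x ∈ R, σ x ∈ R) (hRfix : ∀ x ∈ R, ∀ h ∈ H, h x = x)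
    (hoff : ∀ i j : Fin r, i ≠ j → ∑ h : H, (h : A ≃+* A) (v i * σ (v j)) = 0)
    (hγR : ∀ x ∈ R, γ * x = x * γ)
    (hγtr : ∀ i : Fin r, (∑ h : H, (h : A ≃+* A) (v i * σ (v i))) = γ) {n : ℕ}
    (w x : Fin n → A) :
    ∑ h : H, (h : A ≃+* A) (∑ i, w i * σ (x i)) =
      γ * ∑ i, ∑ j, (ρ (w i) j : A) * σ (ρ (x i) j) := by
  rw [mul_sum]
  simp only [map_sum]
  rw [sum_comm]
  exact sum_congr rfl fun i _ =>
    trace_mul_sigma_eq_gamma_mul hρ hadd hmul hσR hRfix hoff hγR hγtr (w i) (x i)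

end PseudoSelfDual

theorem stmt_6_general {A : Type*} [Ring A] [Fintype A] (R : Subring A)
    (r : ℕ) (v : Fin r → A) (ρ : A → Fin r → R)
    (hρ : ∀ a : A, a = ∑ i, (ρ a i : A) * v i)
    (huniq : ∀ c : Fin r → R, ∑ i, (c i : A) * v i = 0 → ∀ i, c i = 0)
    (σ : A → A)
    (hadd : ∀ a b : A, σ (a + b) = σ a + σ b)
    (hmul : ∀ a b : A, σ (a * b) = σ b * σ a)
    (hσR : σ '' (R : Set A) = (R : Set A))
    (H : Subgroup (A ≃+* A)) [Fintype H]
    (hRfix : ∀ x ∈ R, ∀ h ∈ H, h x = x)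
    (htro : ∀ i j : Fin r, (∑ h : H, (h : A ≃+* A) (v i * σ (v j))) = 0 ↔ i ≠ j)
    (γ : A)
    (hγl : ∀ a : A, γ * a = 0 → a = 0)
    (hγR : ∀ x ∈ R, γ * x = x * γ)
    (hγtr : ∀ i : Fin r, (∑ h : H, (h : A ≃+* A) (v i * σ (v i))) = γ)
    (n : ℕ) (C : Submodule A (Fin n → A))
    (hcardA : Nat.card C *
        Nat.card {w : Fin n → A | ∀ c ∈ C, ∑ i, w i * σ (c i) = 0} =
        Nat.card A ^ n)
    (hcardR : Nat.card ((fun x : Fin n → A => fun i j => ρ (x i) j) ''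
          (C : Set (Fin n → A))) *
        Nat.card {u : Fin n → Fin r → R |
          ∀ x ∈ C, ∑ i, ∑ j, (u i j : A) * σ ((ρ (x i) j : A)) = 0} =
        Nat.card R ^ (r * n)) :
    (fun x : Fin n → A => fun i j => ρ (x i) j) ''
        {w : Fin n → A | ∀ c ∈ C, ∑ i, w i * σ (c i) = 0}
      = {u : Fin n → Fin r → R |
          ∀ x ∈ C, ∑ i, ∑ j, (u i j : A) * σ ((ρ (x i) j : A)) = 0} := by
  have hΦ := injective_pi_coords hρ n
  have hσR' : ∀ x ∈ R, σ x ∈ R := fun x hx => hσR.subset (Set.mem_image_of_mem σ hx)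
  have hoff : ∀ i j : Fin r, i ≠ j → ∑ h : H, (h : A ≃+* A) (v i * σ (v j)) = 0 :=
    fun i j => (htro i j).mpr
  refine Set.eq_of_subset_of_ncard_le ?_ ?_ (Set.toFinite _)
  · rintro _ ⟨w, hw, rfl⟩ x hx
    apply hγl
    rw [← trace_form_eq_gamma_mul hρ hadd hmul hσR' hRfix hoff hγR hγtr, hw x hx]
    simp only [map_zero, sum_const_zero]
  · rw [Nat.card_image_of_injective hΦ, SetLike.coe_sort_coe] at hcardR
    rw [← Nat.card_coe_set_eq, ← Nat.card_coe_set_eq, Nat.card_image_of_injective hΦ]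
    refine (Nat.eq_of_mul_eq_mul_left (Nat.card_pos (α := C)) ?_).le
    rw [hcardR, hcardA, card_eq_card_pow_of_coords hρ huniq, pow_mul]

/-- Theorem: if `𝓑` is a σ-pseudo-self-dual `R`-basis of `A` with respect to a
finite subgroup `H` of `Aut(A)` whose fixed ring contains `R`, and `C` is a
linear code of length `n` over `A`, then (assuming the cardinality identities
`|C|·|C^⊥| = |A|^n` and `|Φ(C)|·|Φ(C)^⊥| = |R|^{rn}`, which hold when `A` and
`R` are Frobenius) `Φ(C^⊥) = Φ(C)^⊥`. -/
theorem stmt_6 {A : Type*} [Ring A] [Fintype A] (R : Subring A)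
    (r : ℕ) (v : Fin r → A) (ρ : A → Fin r → R)
    (hρ : ∀ a : A, a = ∑ i, (ρ a i : A) * v i)
    (huniq : ∀ c : Fin r → R, ∑ i, (c i : A) * v i = 0 → ∀ i, c i = 0)
    (σ : A → A)
    (hbij : Function.Bijective σ)
    (hadd : ∀ a b : A, σ (a + b) = σ a + σ b)
    (hmul : ∀ a b : A, σ (a * b) = σ b * σ a)
    (hone : σ 1 = 1)
    (hinv : ∀ a : A, σ (σ a) = a)
    (hσR : σ '' (R : Set A) = (R : Set A))
    (H : Subgroup (A ≃+* A)) [Fintype H]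
    (hRfix : ∀ x ∈ R, ∀ h ∈ H, h x = x)
    (htro : ∀ i j : Fin r, (∑ h : H, (h : A ≃+* A) (v i * σ (v j))) = 0 ↔ i ≠ j)
    (γ : A)
    (hγl : ∀ a : A, γ * a = 0 → a = 0)
    (hγr : ∀ a : A, a * γ = 0 → a = 0)
    (hγR : ∀ x ∈ R, γ * x = x * γ)
    (hγtr : ∀ i : Fin r, (∑ h : H, (h : A ≃+* A) (v i * σ (v i))) = γ)
    (n : ℕ) (C : Submodule A (Fin n → A))
    (hcardA : Nat.card C *
        Nat.card {w : Fin n → A | ∀ c ∈ C, ∑ i, w i * σ (c i) = 0} =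
        Nat.card A ^ n)
    (hcardR : Nat.card ((fun x : Fin n → A => fun i j => ρ (x i) j) ''
          (C : Set (Fin n → A))) *
        Nat.card {u : Fin n → Fin r → R |
          ∀ x ∈ C, ∑ i, ∑ j, (u i j : A) * σ ((ρ (x i) j : A)) = 0} =
        Nat.card R ^ (r * n)) :
    (fun x : Fin n → A => fun i j => ρ (x i) j) ''
        {w : Fin n → A | ∀ c ∈ C, ∑ i, w i * σ (c i) = 0}
      = {u : Fin n → Fin r → R |
          ∀ x ∈ C, ∑ i, ∑ j, (u i j : A) * σ ((ρ (x i) j : A)) = 0} :=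
  stmt_6_general R r v ρ hρ huniq σ hadd hmul hσR H hRfix htro γ hγl hγR hγtr n C hcardA hcardR
end

section
/- Assume 𝓑 is symmetric, i.e. M_v = M_vᵀ for every basis element v ∈ 𝓑. Then the ring A is commutative. -/
/-!
Right multiplication gives a map `a ↦ M a` from `A` to `r × r` matrices over `R` which is
multiplicative (`v i (a b) = (v i a) b`), injective (`1` is an `R`-combination of the `v i`) and,
since `R` is central, `R`-linear. By linearity every `M a` is symmetric, so over the commutative
ring `R` we get `M (a b) = (M (a b))ᵀ = (M a M b)ᵀ = M b M a = M (b a)`, whence `a b = b a`.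
-/

open Matrix

theorem mul_comm_of_injective_of_transpose_eq {A S n : Type*} [Mul A] [CommSemiring S]
    [Fintype n] (φ : A → Matrix n n S) (hinj : Function.Injective φ)
    (hmul : ∀ a b, φ (a * b) = φ a * φ b) (hsymm : ∀ a, (φ a)ᵀ = φ a) (a b : A) :
    a * b = b * a :=
  hinj <| by rw [← hsymm (a * b), hmul, hmul, transpose_mul, hsymm, hsymm]

section RightMulMatrix

variable {A : Type*} [Ring A] {R : Subring A} {ι : Type*} [Fintype ι]

def IsRightMulMatrix (v : ι → A) (M : A → Matrix ι ι R) : Prop :=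
  ∀ a i, v i * a = ∑ j, (M a i j : A) * v j

theorem eq_of_forall_mul_eq {v : ι → A} {c : ι → A} (h1 : ∑ i, c i * v i = 1) {a b : A}
    (h : ∀ i, v i * a = v i * b) : a = b := by
  rw [← one_mul a, ← one_mul b, ← h1]
  simp only [Finset.sum_mul, mul_assoc, h]

namespace IsRightMulMatrix

variable {v : ι → A} {M : A → Matrix ι ι R} (hM : IsRightMulMatrix v M)
include hM

theorem injective {c : ι → A} (h1 : ∑ i, c i * v i = 1) : Function.Injective M :=
  fun a b hab => eq_of_forall_mul_eq h1 fun i => by rw [hM a, hM b, hab]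

theorem eq_of_forall_mul (hv : LinearIndependent R v) {a : A} {N : Matrix ι ι R}
    (h : ∀ i, v i * a = ∑ j, (N i j : A) * v j) : M a = N :=
  Matrix.ext fun i => Fintype.linearIndependent_iffₛ.1 hv _ _ <| (hM a i).symm.trans (h i)

theorem map_mul (hv : LinearIndependent R v) (a b : A) : M (a * b) = M a * M b := by
  refine hM.eq_of_forall_mul hv fun i => ?_
  rw [← mul_assoc, hM a i, Finset.sum_mul]
  simp only [mul_assoc, hM b, Finset.mul_sum, mul_apply, AddSubmonoidClass.coe_finsetSum,
    Subring.coe_mul, Finset.sum_mul]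
  exact Finset.sum_comm

theorem map_sum_mul (hcentral : ∀ x ∈ R, ∀ a : A, x * a = a * x) (hv : LinearIndependent R v)
    (c : ι → R) : M (∑ i, (c i : A) * v i) = ∑ i, c i • M (v i) := by
  refine hM.eq_of_forall_mul hv fun p => ?_
  simp only [Finset.mul_sum, ← mul_assoc, ← hcentral _ (c _).2 (v p)]
  simp only [mul_assoc, hM (v _) p, Finset.mul_sum, Matrix.sum_apply, Matrix.smul_apply,
    smul_eq_mul, AddSubmonoidClass.coe_finsetSum, Subring.coe_mul, Finset.sum_mul]
  exact Finset.sum_comm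

end IsRightMulMatrix

end RightMulMatrix

theorem stmt_11_general {A : Type*} [Ring A] (R : Subring A)
    (hcentral : ∀ x ∈ R, ∀ a : A, x * a = a * x)
    (r : ℕ) (v : Fin r → A) (ρ : A → Fin r → R)
    (hρ : ∀ a : A, a = ∑ i, (ρ a i : A) * v i)
    (huniq : ∀ c : Fin r → R, ∑ i, (c i : A) * v i = 0 → ∀ i, c i = 0)
    (M : A → Matrix (Fin r) (Fin r) R)
    (hM : ∀ (a : A) (i : Fin r), v i * a = ∑ j, (M a i j : A) * v j)
    (hsymm : ∀ i : Fin r, M (v i) = (M (v i))ᵀ) :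
    ∀ a b : A, a * b = b * a := by
  let _ : CommRing R := { R.toRing with mul_comm := fun x y => Subtype.ext (hcentral x x.2 y) }
  have hM : IsRightMulMatrix v M := hM
  have hv : LinearIndependent R v := Fintype.linearIndependent_iff.2 huniq
  have hsymm_all (a : A) : (M a)ᵀ = M a := by
    rw [hρ a, hM.map_sum_mul hcentral hv, transpose_sum]
    simp only [transpose_smul, ← hsymm]
  exact mul_comm_of_injective_of_transpose_eq M (hM.injective (hρ 1).symm) (hM.map_mul hv)
    hsymm_all

/-- Lemma: if the `R`-basis `𝓑` is symmetric (every basis element has a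
symmetric right-multiplication matrix), then the ring `A` is commutative. -/
theorem stmt_11 {A : Type*} [Ring A] [Fintype A] (R : Subring A)
    (hcentral : ∀ x ∈ R, ∀ a : A, x * a = a * x)
    (r : ℕ) (v : Fin r → A) (ρ : A → Fin r → R)
    (hρ : ∀ a : A, a = ∑ i, (ρ a i : A) * v i)
    (huniq : ∀ c : Fin r → R, ∑ i, (c i : A) * v i = 0 → ∀ i, c i = 0)
    (M : A → Matrix (Fin r) (Fin r) R)
    (hM : ∀ (a : A) (i : Fin r), v i * a = ∑ j, (M a i j : A) * v j)
    (hsymm : ∀ i : Fin r, M (v i) = (M (v i))ᵀ) :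
    ∀ a b : A, a * b = b * a :=
  stmt_11_general R hcentral r v ρ hρ huniq M hM hsymm
end

section
/- Assume 𝓑 is symmetric and that σ fixes every element of 𝓑 (σ(v) = v for all v ∈ 𝓑). Then for all x, y ∈ A^n, if ⟨x,y⟩_{A^n} = 0 then ⟨Φ(x),Φ(y)⟩_{R^{nr}} = 0. -/
/-!
For a symmetric basis the coordinate dot product is a trace form:
`ρ(a) ⬝ ρ(c) = ρ(1) ⬝ ρ(a c)`. Both sides are `R`-bilinear, and on basis vectors `v_i, v_k` the
symmetry of the structure constants turns the right-hand side into the `i`-th coordinate of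
`1 · v_k`. Since `σ` fixes the basis and maps `R` to itself, `ρ(σ a)` is `σ` applied to `ρ(a)`
coordinatewise, so `⟨Φ x, Φ y⟩ = ρ(1) ⬝ ρ(⟨x, y⟩) = 0`.
-/

open Matrix Module

theorem Module.Basis.exists_of_linearIndependent {ι R M : Type*} [Fintype ι] [Ring R]
    [AddCommGroup M] [Module R M] {v : ι → M} (hv : LinearIndependent R v) {ρ : M → ι → R}
    (hρ : ∀ a, ∑ i, ρ a i • v i = a) : ∃ b : Basis ι R M, ⇑b = v ∧ ⇑b.equivFun = ρ := by
  let b := Basis.mk hv fun a _ =>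
    hρ a ▸ Submodule.sum_mem _ fun i _ => Submodule.smul_mem _ _ (Submodule.subset_span ⟨i, rfl⟩)
  have hb : ⇑b = v := Basis.coe_mk _ _
  refine ⟨b, hb, funext fun a => ?_⟩
  conv_lhs => rw [← hρ a, ← hb, b.equivFun_apply, b.repr_sum_self]

section

variable {ι R A : Type*} [Fintype ι] [CommRing R] [Ring A] [Algebra R A]

noncomputable def Module.Basis.rightMulMatrix (b : Basis ι R A) (a : A) : Matrix ι ι R :=
  Matrix.of fun i => b.equivFun (b i * a)

def Module.Basis.IsSymmetric (b : Basis ι R A) : Prop :=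
  ∀ k, (b.rightMulMatrix (b k)).IsSymm

namespace Module.Basis.IsSymmetric

variable {b : Basis ι R A}

theorem equivFun_mul_comm (hb : b.IsSymmetric) (i j k : ι) :
    b.equivFun (b i * b k) j = b.equivFun (b j * b k) i :=
  congr_fun₂ (hb k) j i

theorem dotProduct_equivFun (hb : b.IsSymmetric) (a c : A) :
    b.equivFun a ⬝ᵥ b.equivFun c = b.equivFun 1 ⬝ᵥ b.equivFun (a * c) := by
  classical
  let B₁ : A →ₗ[R] A →ₗ[R] R :=
    LinearMap.mk₂ R (fun a c => b.equivFun a ⬝ᵥ b.equivFun c)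
      (by simp [add_dotProduct]) (by simp) (by simp [dotProduct_add]) (by simp)
  let B₂ : A →ₗ[R] A →ₗ[R] R :=
    LinearMap.mk₂ R (fun a c => b.equivFun 1 ⬝ᵥ b.equivFun (a * c))
      (by simp [add_mul, dotProduct_add]) (by simp) (by simp [mul_add, dotProduct_add]) (by simp)
  suffices B₁ = B₂ from LinearMap.congr_fun₂ this a c
  refine LinearMap.ext_basis b b fun i k => ?_
  have hone_mul : ∑ l, b.equivFun 1 l • (b l * b k) = b k := by
    simp_rw [← smul_mul_assoc, ← Finset.sum_mul, b.sum_equivFun, one_mul]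
  calc b.equivFun (b i) ⬝ᵥ b.equivFun (b k)
      = b.equivFun (∑ l, b.equivFun 1 l • (b l * b k)) i := by
        rw [hone_mul]
        simp [dotProduct, b.equivFun_self, eq_comm]
    _ = b.equivFun 1 ⬝ᵥ b.equivFun (b i * b k) := by
        simp [dotProduct, hb.equivFun_mul_comm i _ k]

theorem sum_dotProduct_equivFun (hb : b.IsSymmetric) {κ : Type*} (s : Finset κ) (x y : κ → A) :
    ∑ i ∈ s, b.equivFun (x i) ⬝ᵥ b.equivFun (y i) =
      b.equivFun 1 ⬝ᵥ b.equivFun (∑ i ∈ s, x i * y i) := by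
  rw [map_sum, dotProduct_sum]
  exact Finset.sum_congr rfl fun i _ => hb.dotProduct_equivFun (x i) (y i)

end Module.Basis.IsSymmetric

theorem Module.Basis.equivFun_map_of_antiMul (b : Basis ι R A) (σ : A →+ A)
    (hmul : ∀ a c, σ (a * c) = σ c * σ a) (hfix : ∀ i, σ (b i) = b i) (s : R → R)
    (hs : ∀ t, σ (algebraMap R A t) = algebraMap R A (s t)) (a : A) :
    b.equivFun (σ a) = fun j => s (b.equivFun a j) := by
  suffices σ a = ∑ j, s (b.equivFun a j) • b j by
    rw [this, b.equivFun_apply, b.repr_sum_self]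
  conv_lhs => rw [← b.sum_equivFun a]
  simp_rw [map_sum, Algebra.smul_def, hmul, hfix, hs, Algebra.commutes]

end

theorem stmt_12_general {A : Type*} [Ring A] (R : Subring A)
    (hcentral : ∀ x ∈ R, ∀ a : A, x * a = a * x)
    (r : ℕ) (v : Fin r → A) (ρ : A → Fin r → R)
    (hρ : ∀ a : A, a = ∑ i, (ρ a i : A) * v i)
    (huniq : ∀ c : Fin r → R, ∑ i, (c i : A) * v i = 0 → ∀ i, c i = 0)
    (M : A → Matrix (Fin r) (Fin r) R)
    (hM : ∀ (a : A) (i : Fin r), v i * a = ∑ j, (M a i j : A) * v j)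
    (hsymm : ∀ i : Fin r, M (v i) = (M (v i))ᵀ)
    (σ : A → A)
    (hadd : ∀ a b : A, σ (a + b) = σ a + σ b)
    (hmul : ∀ a b : A, σ (a * b) = σ b * σ a)
    (hσR : σ '' (R : Set A) = (R : Set A))
    (hfix : ∀ i : Fin r, σ (v i) = v i)
    (n : ℕ) (x y : Fin n → A)
    (hxy : ∑ i, x i * σ (y i) = 0) :
    ∑ i, ∑ j, (ρ (x i) j : A) * σ ((ρ (y i) j : A)) = 0 := by
  let _ : CommRing R := { R.toRing with mul_comm := fun p q => Subtype.ext (hcentral p p.2 q) }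
  let _ : Algebra R A := R.subtype.toAlgebra' fun c a => hcentral c c.2 a
  obtain ⟨b, rfl, rfl⟩ := Basis.exists_of_linearIndependent
    (Fintype.linearIndependent_iff.2 huniq) fun a => (hρ a).symm
  have hb : b.IsSymmetric := fun k => by
    have hMb : b.rightMulMatrix (b k) = M (b k) :=
      funext fun i => (congrArg b.equivFun (hM (b k) i)).trans
        ((b.equivFun_apply _).trans (b.repr_sum_self _))
    rw [hMb]
    exact (hsymm k).symm
  let s : R → R := fun t => ⟨σ t, hσR.subset ⟨t, t.2, rfl⟩⟩
  have hσ : ∀ a, b.equivFun (σ a) = fun j => s (b.equivFun a j) :=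
    b.equivFun_map_of_antiMul (AddMonoidHom.mk' σ hadd) hmul hfix s fun _ => rfl
  have horth := hb.sum_dotProduct_equivFun Finset.univ x (fun i => σ (y i))
  rw [hxy, map_zero, dotProduct_zero] at horth
  calc ∑ i, ∑ j, (b.equivFun (x i) j : A) * σ (b.equivFun (y i) j)
      = algebraMap R A (∑ i, b.equivFun (x i) ⬝ᵥ b.equivFun (σ (y i))) := by
        simp only [map_sum, map_mul, dotProduct, hσ]
        rfl
    _ = 0 := by rw [horth, map_zero]

/-- Lemma: if the `R`-basis `𝓑` is symmetric and the involution `σ` fixes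
every basis element, then the coordinate map `Φ` preserves orthogonality:
`⟨x,y⟩_{A^n} = 0` implies `⟨Φ(x),Φ(y)⟩_{R^{nr}} = 0`. -/
theorem stmt_12 {A : Type*} [Ring A] [Fintype A] (R : Subring A)
    (hcentral : ∀ x ∈ R, ∀ a : A, x * a = a * x)
    (r : ℕ) (v : Fin r → A) (ρ : A → Fin r → R)
    (hρ : ∀ a : A, a = ∑ i, (ρ a i : A) * v i)
    (huniq : ∀ c : Fin r → R, ∑ i, (c i : A) * v i = 0 → ∀ i, c i = 0)
    (M : A → Matrix (Fin r) (Fin r) R)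
    (hM : ∀ (a : A) (i : Fin r), v i * a = ∑ j, (M a i j : A) * v j)
    (hsymm : ∀ i : Fin r, M (v i) = (M (v i))ᵀ)
    (σ : A → A)
    (hbij : Function.Bijective σ)
    (hadd : ∀ a b : A, σ (a + b) = σ a + σ b)
    (hmul : ∀ a b : A, σ (a * b) = σ b * σ a)
    (hone : σ 1 = 1)
    (hinv : ∀ a : A, σ (σ a) = a)
    (hσR : σ '' (R : Set A) = (R : Set A))
    (hfix : ∀ i : Fin r, σ (v i) = v i)
    (n : ℕ) (x y : Fin n → A)
    (hxy : ∑ i, x i * σ (y i) = 0) :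
    ∑ i, ∑ j, (ρ (x i) j : A) * σ ((ρ (y i) j : A)) = 0 :=
  stmt_12_general R hcentral r v ρ hρ huniq M hM hsymm σ hadd hmul hσR hfix n x y hxy
end

section
/- Assume 𝓑 is symmetric, σ fixes every element of 𝓑, and let C ⊆ A^n be a left A-submodule (a linear code of length n over A). Assume furthermore the cardinality identities |C| · |C^⊥| = |A|^n and |Φ(C)| · |Φ(C)^⊥| = |R|^{rn} (these hold whenever A and R are finite Frobenius rings, by Wood's theorem). Then Φ(C^⊥) = Φ(C)^⊥. -/
/-!
Write `v_j v_k = ∑_t c_{jk}^t v_t` with `c_{jk}^t = (M_{v_k})_{jt}`, and `β(a, b) = ⟨ρ a, ρ b⟩_{R^r}`.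
Since `σ` reverses products and fixes the basis, `σ(c_{jk}^t) = c_{kj}^t`; combined with the
symmetry of the `M_{v_k}` this gives `σ(c_{tk}^j) = c_{jk}^t`, which is exactly what makes
`a σ(b) = ∑_t β(a, v_t b) v_t`. In the other direction, expanding `b = 1 · b = ∑_t ρ(1)_t v_t b`
gives `β(a, b) = ∑_t β(a, v_t b) σ(ρ(1)_t)`. Summing over coordinates, and since `C` is stable
under left multiplication by each `v_t`, `w ∈ C^⊥` if and only if `Φ(w) ∈ Φ(C)^⊥`; as `Φ` is
onto, `Φ(C^⊥) = Φ(C)^⊥`.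
-/

open Matrix

structure IsCentralBasis {A : Type*} [Ring A] (R : Subring A) {r : ℕ} (v : Fin r → A)
    (ρ : A → Fin r → R) : Prop where
  central : ∀ x ∈ R, ∀ a : A, x * a = a * x
  repr_eq : ∀ a : A, a = ∑ i, (ρ a i : A) * v i
  eq_zero_of_sum_eq_zero : ∀ c : Fin r → R, ∑ i, (c i : A) * v i = 0 → ∀ i, c i = 0

/-- `⟨ρ a, ρ b⟩` for the standard `σ`-hermitian form of `R^r`. -/
def coordForm {A : Type*} [Ring A] {R : Subring A} {r : ℕ} (ρ : A → Fin r → R) (σ : A →+ A)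
    (a b : A) : A :=
  ∑ j, (ρ a j : A) * σ (ρ b j)

namespace IsCentralBasis

variable {A : Type*} [Ring A] {R : Subring A} {r : ℕ} {v : Fin r → A} {ρ : A → Fin r → R}

theorem coord_eq (hB : IsCentralBasis R v ρ) {a : A} {c : Fin r → R}
    (h : a = ∑ i, (c i : A) * v i) : ρ a = c := by
  funext i
  have h0 : ∑ i, ((ρ a - c) i : A) * v i = 0 := by
    simp only [Pi.sub_apply, AddSubgroupClass.coe_sub, sub_mul, Finset.sum_sub_distrib]
    rw [← hB.repr_eq, ← h, sub_self]
  exact sub_eq_zero.mp (hB.eq_zero_of_sum_eq_zero _ h0 i)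

theorem coe_coord_eq (hB : IsCentralBasis R v ρ) {a : A} {c : Fin r → A} (hc : ∀ i, c i ∈ R)
    (h : a = ∑ i, c i * v i) (i : Fin r) : (ρ a i : A) = c i :=
  congrArg Subtype.val (congrFun (hB.coord_eq (c := fun i => ⟨c i, hc i⟩) h) i)

theorem coeff_eq_zero (hB : IsCentralBasis R v ρ) {c : Fin r → A} (hc : ∀ i, c i ∈ R)
    (h : ∑ i, c i * v i = 0) (i : Fin r) : c i = 0 :=
  congrArg Subtype.val (hB.eq_zero_of_sum_eq_zero (fun i => ⟨c i, hc i⟩) h i)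

theorem coord_surjective (hB : IsCentralBasis R v ρ) : Function.Surjective ρ :=
  fun c => ⟨∑ i, (c i : A) * v i, hB.coord_eq rfl⟩

theorem coord_sum_mul (hB : IsCentralBasis R v ρ) (e : Fin r → R) (y : Fin r → A) (j : Fin r) :
    (ρ (∑ t, (e t : A) * y t) j : A) = ∑ t, (e t : A) * ρ (y t) j := by
  refine hB.coe_coord_eq (fun j => Subring.sum_mem _ fun t _ => R.mul_mem (e t).2 (ρ (y t) j).2)
    ?_ j
  conv_lhs => enter [2, t]; rw [hB.repr_eq (y t)]
  simp only [Finset.mul_sum, Finset.sum_mul, mul_assoc]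
  exact Finset.sum_comm

theorem coord_basis_mul (hB : IsCentralBasis R v ρ) {M : A → Matrix (Fin r) (Fin r) R}
    (hM : ∀ (a : A) (i : Fin r), v i * a = ∑ j, (M a i j : A) * v j) (b : A) (t j : Fin r) :
    (ρ (v t * b) j : A) = ∑ k, (ρ b k : A) * M (v k) t j := by
  have hexp : v t * b = ∑ k, (ρ b k : A) * (v t * v k) := by
    conv_lhs => rw [hB.repr_eq b]
    simp only [Finset.mul_sum, ← mul_assoc, hB.central _ (ρ b _).2 (v t)]
  rw [hexp, hB.coord_sum_mul]
  congr! 2 with k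
  exact hB.coe_coord_eq (fun j => (M (v k) t j).2) (hM _ t) j

variable {M : A → Matrix (Fin r) (Fin r) R} {σ : A →+ A}

theorem sigma_structConst_swap (hB : IsCentralBasis R v ρ)
    (hM : ∀ (a : A) (i : Fin r), v i * a = ∑ j, (M a i j : A) * v j)
    (hmul : ∀ a b : A, σ (a * b) = σ b * σ a) (hσR : ∀ x ∈ R, σ x ∈ R)
    (hfix : ∀ i, σ (v i) = v i) (a b t : Fin r) :
    σ (M (v b) a t) = M (v a) b t := by
  have h : v b * v a = ∑ s, σ (M (v b) a s) * v s := by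
    calc v b * v a = σ (v a * v b) := by rw [hmul, hfix, hfix]
      _ = ∑ s, σ (M (v b) a s) * v s := by
        rw [hM, map_sum]
        refine Finset.sum_congr rfl fun s _ => ?_
        rw [hmul, hfix, hB.central _ (hσR _ (M (v b) a s).2)]
  exact (hB.coe_coord_eq (fun s => hσR _ (M (v b) a s).2) h t).symm.trans
    (hB.coe_coord_eq (fun s => (M (v a) b s).2) (hM _ b) t)

theorem sigma_structConst (hB : IsCentralBasis R v ρ)
    (hM : ∀ (a : A) (i : Fin r), v i * a = ∑ j, (M a i j : A) * v j)
    (hsymm : ∀ i, (M (v i)).IsSymm)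
    (hmul : ∀ a b : A, σ (a * b) = σ b * σ a) (hσR : ∀ x ∈ R, σ x ∈ R)
    (hfix : ∀ i, σ (v i) = v i) (j k t : Fin r) :
    σ (M (v k) t j) = M (v k) j t := by
  have swap := hB.sigma_structConst_swap hM hmul hσR hfix
  rw [swap, (hsymm t).apply, ← swap, (hsymm j).apply, swap]

theorem sigma_eq_sum (hB : IsCentralBasis R v ρ) (hmul : ∀ a b : A, σ (a * b) = σ b * σ a)
    (hfix : ∀ i, σ (v i) = v i) (b : A) :
    σ b = ∑ k, v k * σ (ρ b k) := by
  conv_lhs => rw [hB.repr_eq b]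
  simp only [map_sum, hmul, hfix]

theorem mul_sigma_eq (hB : IsCentralBasis R v ρ)
    (hM : ∀ (a : A) (i : Fin r), v i * a = ∑ j, (M a i j : A) * v j)
    (hsymm : ∀ i, (M (v i)).IsSymm)
    (hmul : ∀ a b : A, σ (a * b) = σ b * σ a) (hσR : ∀ x ∈ R, σ x ∈ R)
    (hfix : ∀ i, σ (v i) = v i) (a b : A) :
    a * σ b = ∑ t, coordForm ρ σ a (v t * b) * v t := by
  have hσcoord : ∀ t j, σ (ρ (v t * b) j) = ∑ k, (M (v k) j t : A) * σ (ρ b k) := by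
    intro t j
    simp only [hB.coord_basis_mul hM, map_sum, hmul, hB.sigma_structConst hM hsymm hmul hσR hfix]
  have hterm : ∀ j k, (ρ a j : A) * v j * (v k * σ (ρ b k)) =
      ∑ t, (ρ a j : A) * ((M (v k) j t : A) * σ (ρ b k)) * v t := by
    intro j k
    rw [← mul_assoc, mul_assoc _ (v j), hM, Finset.mul_sum, Finset.sum_mul]
    refine Finset.sum_congr rfl fun t _ => ?_
    rw [mul_assoc, mul_assoc, ← hB.central _ (hσR _ (ρ b k).2) (v t), mul_assoc, mul_assoc]
  calc a * σ b = ∑ j, ∑ k, (ρ a j : A) * v j * (v k * σ (ρ b k)) := by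
        rw [hB.sigma_eq_sum hmul hfix, Finset.mul_sum]
        conv_lhs => rw [hB.repr_eq a]
        simp only [Finset.sum_mul]
        exact Finset.sum_comm
    _ = ∑ t, coordForm ρ σ a (v t * b) * v t := by
        simp only [hterm, coordForm, hσcoord, Finset.mul_sum, Finset.sum_mul]
        exact (Finset.sum_congr rfl fun _ _ => Finset.sum_comm).trans Finset.sum_comm

theorem coordForm_eq_sum (hB : IsCentralBasis R v ρ) (hmul : ∀ a b : A, σ (a * b) = σ b * σ a)
    (a b : A) :
    coordForm ρ σ a b = ∑ t, coordForm ρ σ a (v t * b) * σ (ρ 1 t) := by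
  have hb : b = ∑ t, (ρ 1 t : A) * (v t * b) := by
    conv_lhs => rw [← one_mul b, hB.repr_eq 1]
    simp only [Finset.sum_mul, mul_assoc]
  have hσcoord : ∀ j, σ (ρ b j) = ∑ t, σ (ρ (v t * b) j) * σ (ρ 1 t) := by
    intro j
    conv_lhs => rw [hb, hB.coord_sum_mul]
    simp only [map_sum, hmul]
  simp only [coordForm, hσcoord, Finset.mul_sum, Finset.sum_mul, mul_assoc]
  exact Finset.sum_comm

theorem coordForm_mem (hσR : ∀ x ∈ R, σ x ∈ R) (a b : A) : coordForm ρ σ a b ∈ R :=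
  Subring.sum_mem _ fun j _ => R.mul_mem (ρ a j).2 (hσR _ (ρ b j).2)

variable {n : ℕ}

theorem sum_mul_sigma_eq (hB : IsCentralBasis R v ρ)
    (hM : ∀ (a : A) (i : Fin r), v i * a = ∑ j, (M a i j : A) * v j)
    (hsymm : ∀ i, (M (v i)).IsSymm)
    (hmul : ∀ a b : A, σ (a * b) = σ b * σ a) (hσR : ∀ x ∈ R, σ x ∈ R)
    (hfix : ∀ i, σ (v i) = v i) (w c : Fin n → A) :
    ∑ i, w i * σ (c i) = ∑ t, (∑ i, coordForm ρ σ (w i) (v t * c i)) * v t := by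
  simp only [hB.mul_sigma_eq hM hsymm hmul hσR hfix, Finset.sum_mul]
  exact Finset.sum_comm

theorem sum_coordForm_eq (hB : IsCentralBasis R v ρ) (hmul : ∀ a b : A, σ (a * b) = σ b * σ a)
    (w c : Fin n → A) :
    ∑ i, coordForm ρ σ (w i) (c i) =
      ∑ t, (∑ i, coordForm ρ σ (w i) (v t * c i)) * σ (ρ 1 t) := by
  rw [Finset.sum_congr rfl fun i _ => hB.coordForm_eq_sum hmul (w i) (c i)]
  simp only [Finset.sum_mul]
  exact Finset.sum_comm

theorem orthogonal_iff_coord_orthogonal (hB : IsCentralBasis R v ρ)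
    (hM : ∀ (a : A) (i : Fin r), v i * a = ∑ j, (M a i j : A) * v j)
    (hsymm : ∀ i, (M (v i)).IsSymm)
    (hmul : ∀ a b : A, σ (a * b) = σ b * σ a) (hσR : ∀ x ∈ R, σ x ∈ R)
    (hfix : ∀ i, σ (v i) = v i) (C : Submodule A (Fin n → A)) (w : Fin n → A) :
    (∀ c ∈ C, ∑ i, w i * σ (c i) = 0) ↔ ∀ c ∈ C, ∑ i, coordForm ρ σ (w i) (c i) = 0 := by
  have hexp := hB.sum_mul_sigma_eq hM hsymm hmul hσR hfix w
  constructor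
  · intro hw c hc
    have hcoeff : ∀ t, ∑ i, coordForm ρ σ (w i) (v t * c i) = 0 :=
      hB.coeff_eq_zero (fun t => Subring.sum_mem _ fun i _ => coordForm_mem hσR _ _)
        ((hexp c).symm.trans (hw c hc))
    rw [hB.sum_coordForm_eq hmul]
    simp only [hcoeff, zero_mul, Finset.sum_const_zero]
  · intro hw c hc
    have hcoeff : ∀ t, ∑ i, coordForm ρ σ (w i) (v t * c i) = 0 :=
      fun t => hw (v t • c) (C.smul_mem (v t) hc)
    rw [hexp]
    simp only [hcoeff, zero_mul, Finset.sum_const_zero]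

end IsCentralBasis

theorem stmt_13_general {A : Type*} [Ring A] (R : Subring A)
    (hcentral : ∀ x ∈ R, ∀ a : A, x * a = a * x)
    (r : ℕ) (v : Fin r → A) (ρ : A → Fin r → R)
    (hρ : ∀ a : A, a = ∑ i, (ρ a i : A) * v i)
    (huniq : ∀ c : Fin r → R, ∑ i, (c i : A) * v i = 0 → ∀ i, c i = 0)
    (M : A → Matrix (Fin r) (Fin r) R)
    (hM : ∀ (a : A) (i : Fin r), v i * a = ∑ j, (M a i j : A) * v j)
    (hsymm : ∀ i : Fin r, M (v i) = (M (v i))ᵀ)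
    (σ : A → A)
    (hadd : ∀ a b : A, σ (a + b) = σ a + σ b)
    (hmul : ∀ a b : A, σ (a * b) = σ b * σ a)
    (hσR : σ '' (R : Set A) = (R : Set A))
    (hfix : ∀ i : Fin r, σ (v i) = v i)
    (n : ℕ) (C : Submodule A (Fin n → A)) :
    (fun x : Fin n → A => fun i j => ρ (x i) j) ''
        {w : Fin n → A | ∀ c ∈ C, ∑ i, w i * σ (c i) = 0}
      = {u : Fin n → Fin r → R |
          ∀ x ∈ C, ∑ i, ∑ j, (u i j : A) * σ ((ρ (x i) j : A)) = 0} := by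
  have hB : IsCentralBasis R v ρ := ⟨hcentral, hρ, huniq⟩
  have hσ_mem : ∀ x ∈ R, AddMonoidHom.mk' σ hadd x ∈ R := fun x hx =>
    hσR.subset (Set.mem_image_of_mem σ hx)
  have hperp := hB.orthogonal_iff_coord_orthogonal hM (fun i => (hsymm i).symm) hmul hσ_mem hfix C
  have hsurj : Function.Surjective fun x : Fin n → A => fun i j => ρ (x i) j :=
    hB.coord_surjective.comp_left
  refine (congrArg _ ?_).trans (Set.image_preimage_eq _ hsurj)
  ext w
  exact hperp w

/-- Theorem: if the `R`-basis `𝓑` is symmetric, `σ` fixes every basis element,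
and `C` is a linear code of length `n` over `A`, then (assuming the cardinality
identities `|C|·|C^⊥| = |A|^n` and `|Φ(C)|·|Φ(C)^⊥| = |R|^{rn}`, which hold
when `A` and `R` are Frobenius) `Φ(C^⊥) = Φ(C)^⊥`. -/
theorem stmt_13 {A : Type*} [Ring A] [Fintype A] (R : Subring A)
    (hcentral : ∀ x ∈ R, ∀ a : A, x * a = a * x)
    (r : ℕ) (v : Fin r → A) (ρ : A → Fin r → R)
    (hρ : ∀ a : A, a = ∑ i, (ρ a i : A) * v i)
    (huniq : ∀ c : Fin r → R, ∑ i, (c i : A) * v i = 0 → ∀ i, c i = 0)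
    (M : A → Matrix (Fin r) (Fin r) R)
    (hM : ∀ (a : A) (i : Fin r), v i * a = ∑ j, (M a i j : A) * v j)
    (hsymm : ∀ i : Fin r, M (v i) = (M (v i))ᵀ)
    (σ : A → A)
    (hbij : Function.Bijective σ)
    (hadd : ∀ a b : A, σ (a + b) = σ a + σ b)
    (hmul : ∀ a b : A, σ (a * b) = σ b * σ a)
    (hone : σ 1 = 1)
    (hinv : ∀ a : A, σ (σ a) = a)
    (hσR : σ '' (R : Set A) = (R : Set A))
    (hfix : ∀ i : Fin r, σ (v i) = v i)
    (n : ℕ) (C : Submodule A (Fin n → A))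
    (hcardA : Nat.card C *
        Nat.card {w : Fin n → A | ∀ c ∈ C, ∑ i, w i * σ (c i) = 0} =
        Nat.card A ^ n)
    (hcardR : Nat.card ((fun x : Fin n → A => fun i j => ρ (x i) j) ''
          (C : Set (Fin n → A))) *
        Nat.card {u : Fin n → Fin r → R |
          ∀ x ∈ C, ∑ i, ∑ j, (u i j : A) * σ ((ρ (x i) j : A)) = 0} =
        Nat.card R ^ (r * n)) :
    (fun x : Fin n → A => fun i j => ρ (x i) j) ''
        {w : Fin n → A | ∀ c ∈ C, ∑ i, w i * σ (c i) = 0}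
      = {u : Fin n → Fin r → R |
          ∀ x ∈ C, ∑ i, ∑ j, (u i j : A) * σ ((ρ (x i) j : A)) = 0} :=
  stmt_13_general R hcentral r v ρ hρ huniq M hM hsymm σ hadd hmul hσR hfix n C
end

section
/- Assume 𝓑 is symmetric, i.e. M_v = M_vᵀ for every basis element v ∈ 𝓑. Then for all a, b ∈ A, the Euclidean dot products of coordinate vectors satisfy ρ(a) · ρ(b) = ρ(1) · ρ(ab); in particular, in A = F[x]/(x^r) with a symmetric F-basis one has ρ(x̄^m) · ρ(x̄^n) = ρ(1) · ρ(x̄^{m+n}) for all m, n ≥ 0. -/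
open Matrix

/-! Coordinates turn right multiplication into a vector–matrix product, `ρ(xb) = ρ(x) M_b`. As `R`
is central, `b ↦ M_b` is `R`-linear, `M_b = ∑ₖ ρ(b)ₖ M_{v_k}`, so every `M_b` is symmetric, and then
`ρ(a) · ρ(b) = ρ(a) · ρ(1) M_b = ρ(1) · ρ(a) M_b = ρ(1) · ρ(ab)`. -/

theorem Matrix.dotProduct_vecMul_comm_of_isSymm {ι S : Type*} [Fintype ι] [CommSemiring S]
    {N : Matrix ι ι S} (hN : N.IsSymm) (x y : ι → S) : x ⬝ᵥ (y ᵥ* N) = y ⬝ᵥ (x ᵥ* N) := by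
  rw [← hN.eq, vecMul_transpose, dotProduct_mulVec, dotProduct_comm, hN.eq]

theorem Matrix.isSymm_sum {ι n S : Type*} [AddCommMonoid S] (s : Finset ι) {N : ι → Matrix n n S}
    (hN : ∀ k ∈ s, (N k).IsSymm) : (∑ k ∈ s, N k).IsSymm := by
  rw [IsSymm, transpose_sum]
  exact Finset.sum_congr rfl fun k hk => (hN k hk).eq

section Coordinates

variable {A : Type*} [Ring A] {R : Subring A} {ι : Type*} [Fintype ι] {v : ι → A}

theorem sum_coe_mul_sum_coe_mul (c : ι → R) (N : Matrix ι ι R) :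
    ∑ i, (c i : A) * ∑ j, (N i j : A) * v j = ∑ j, ((c ᵥ* N) j : A) * v j := by
  simp only [vecMul, dotProduct, AddSubmonoidClass.coe_finsetSum, MulMemClass.coe_mul,
    Finset.mul_sum, Finset.sum_mul, mul_assoc]
  exact Finset.sum_comm

theorem eq_of_sum_coe_mul_eq (huniq : ∀ c : ι → R, ∑ i, (c i : A) * v i = 0 → ∀ i, c i = 0)
    {c d : ι → R} (h : ∑ i, (c i : A) * v i = ∑ i, (d i : A) * v i) : c = d := by
  funext i
  refine sub_eq_zero.mp (huniq (c - d) ?_ i)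
  simp only [Pi.sub_apply, AddSubgroupClass.coe_sub, sub_mul, Finset.sum_sub_distrib, h, sub_self]

variable {ρ : A → ι → R} {M : A → Matrix ι ι R}
  (hρ : ∀ a : A, a = ∑ i, (ρ a i : A) * v i)
  (huniq : ∀ c : ι → R, ∑ i, (c i : A) * v i = 0 → ∀ i, c i = 0)
  (hM : ∀ (a : A) (i : ι), v i * a = ∑ j, (M a i j : A) * v j)
include hρ huniq hM

theorem coord_mul_eq_vecMul (x b : A) : ρ (x * b) = ρ x ᵥ* M b := by
  refine eq_of_sum_coe_mul_eq huniq ?_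
  calc ∑ i, (ρ (x * b) i : A) * v i = (∑ i, (ρ x i : A) * v i) * b := by rw [← hρ, ← hρ]
    _ = ∑ i, (ρ x i : A) * ∑ j, (M b i j : A) * v j := by simp only [Finset.sum_mul, mul_assoc, hM]
    _ = _ := sum_coe_mul_sum_coe_mul _ _

theorem mulMatrix_eq_sum_coord_smul (hcentral : ∀ x ∈ R, ∀ a : A, x * a = a * x) (b : A) :
    M b = ∑ k, ρ b k • M (v k) := by
  funext i
  refine eq_of_sum_coe_mul_eq huniq ?_
  calc ∑ j, (M b i j : A) * v j = v i * ∑ k, (ρ b k : A) * v k := by rw [← hM, ← hρ]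
    _ = ∑ k, (ρ b k : A) * (v i * v k) := by
      rw [Finset.mul_sum]
      exact Finset.sum_congr rfl fun k _ => by rw [← mul_assoc, ← hcentral _ (ρ b k).2, mul_assoc]
    _ = ∑ k, (ρ b k : A) * ∑ j, (M (v k) i j : A) * v j := by simp only [hM]
    _ = _ := by
      rw [sum_coe_mul_sum_coe_mul (ρ b) fun k j => M (v k) i j]
      simp [vecMul, dotProduct, Matrix.sum_apply]

end Coordinates

theorem stmt_15_general {A : Type*} [Ring A] (R : Subring A)
    (hcentral : ∀ x ∈ R, ∀ a : A, x * a = a * x)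
    (r : ℕ) (v : Fin r → A) (ρ : A → Fin r → R)
    (hρ : ∀ a : A, a = ∑ i, (ρ a i : A) * v i)
    (huniq : ∀ c : Fin r → R, ∑ i, (c i : A) * v i = 0 → ∀ i, c i = 0)
    (M : A → Matrix (Fin r) (Fin r) R)
    (hM : ∀ (a : A) (i : Fin r), v i * a = ∑ j, (M a i j : A) * v j)
    (hsymm : ∀ i : Fin r, M (v i) = (M (v i))ᵀ) :
    ∀ a b : A, ∑ i, ρ a i * ρ b i = ∑ i, ρ 1 i * ρ (a * b) i := by
  intro a b
  let _ : CommRing R := { R.toRing with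
    mul_comm := fun x y => Subtype.ext (hcentral x x.2 y) }
  have hMb : (M b).IsSymm := by
    rw [mulMatrix_eq_sum_coord_smul hρ huniq hM hcentral b]
    exact isSymm_sum _ fun k _ => IsSymm.smul (hsymm k).symm _
  calc ρ a ⬝ᵥ ρ b = ρ a ⬝ᵥ (ρ 1 ᵥ* M b) := by rw [← coord_mul_eq_vecMul hρ huniq hM, one_mul]
    _ = ρ 1 ⬝ᵥ (ρ a ᵥ* M b) := dotProduct_vecMul_comm_of_isSymm hMb _ _
    _ = ρ 1 ⬝ᵥ ρ (a * b) := by rw [coord_mul_eq_vecMul hρ huniq hM]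

/-- Lemma: if the `R`-basis `𝓑` is symmetric, then the Euclidean dot products
of coordinate vectors satisfy `ρ(a) · ρ(b) = ρ(1) · ρ(ab)` for all `a, b ∈ A`. -/
theorem stmt_15 {A : Type*} [Ring A] [Fintype A] (R : Subring A)
    (hcentral : ∀ x ∈ R, ∀ a : A, x * a = a * x)
    (r : ℕ) (v : Fin r → A) (ρ : A → Fin r → R)
    (hρ : ∀ a : A, a = ∑ i, (ρ a i : A) * v i)
    (huniq : ∀ c : Fin r → R, ∑ i, (c i : A) * v i = 0 → ∀ i, c i = 0)
    (M : A → Matrix (Fin r) (Fin r) R)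
    (hM : ∀ (a : A) (i : Fin r), v i * a = ∑ j, (M a i j : A) * v j)
    (hsymm : ∀ i : Fin r, M (v i) = (M (v i))ᵀ) :
    ∀ a b : A, ∑ i, ρ a i * ρ b i = ∑ i, ρ 1 i * ρ (a * b) i :=
  stmt_15_general R hcentral r v ρ hρ huniq M hM hsymm
end
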